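/- arXiv:2604.01424 — 4 statements merged into one kernel-verified Lean document; each statement's English description precedes it below -/
import Mathlib

section
/- For d, s, r, u, a real with d a positive integer, the integral-sum ∑_{n∈ℤ} ∫_{ℝ^d} (|k|^{2a} ∧ 1) / ((ω_n² + |k|^{2s})(1+ω_n²)^r (1+|k|²)^u) dk with ω_n = 2πn/β (β > 0) is finite provided r > 1/2, 2(u+s) > d, and a > s − d/2 (with s > 0, u ≥ 0, a ≥ 0). -/
open MeasureTheory Real Set
open scoped ENNReal NNReal

section polar

variable {E : Type*} [NormedAddCommGroup E] [NormedSpace ℝ E]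
  [MeasurableSpace E] [BorelSpace E] [Nontrivial E] [FiniteDimensional ℝ E]

lemma lintegral_fun_norm_addHaar' (μ : Measure E) [μ.IsAddHaarMeasure]
    (h : ℝ → ℝ≥0∞) (hh : Measurable h) :
    ∫⁻ x, h ‖x‖ ∂μ = μ.toSphere univ *
      ∫⁻ r in Ioi (0:ℝ), ENNReal.ofReal (r ^ (Module.finrank ℝ E - 1)) * h r := by
  have hmeas0 : MeasurableSet ({0}ᶜ : Set E) := (measurableSet_singleton _).compl
  have step1 : ∫⁻ x, h ‖x‖ ∂μ = ∫⁻ x : ({0}ᶜ : Set E), h ‖(x : E)‖ ∂(μ.comap (↑)) := by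
    rw [lintegral_subtype_comap hmeas0 (fun x => h ‖x‖),
      MeasureTheory.restrict_compl_singleton]
  have hg : Measurable fun p : Metric.sphere (0:E) 1 × Ioi (0:ℝ) => h p.2 :=
    hh.comp (measurable_subtype_coe.comp measurable_snd)
  have step2 : ∫⁻ x : ({0}ᶜ : Set E), h ‖(x : E)‖ ∂(μ.comap (↑))
      = ∫⁻ p : Metric.sphere (0:E) 1 × Ioi (0:ℝ), h p.2
          ∂(μ.toSphere.prod (.volumeIoiPow (Module.finrank ℝ E - 1))) := by
    rw [← (μ.measurePreserving_homeomorphUnitSphereProd).lintegral_comp hg]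
    refine lintegral_congr fun x => ?_
    rw [homeomorphUnitSphereProd_apply_snd_coe]
  have step3 : ∫⁻ p : Metric.sphere (0:E) 1 × Ioi (0:ℝ), h p.2
        ∂(μ.toSphere.prod (.volumeIoiPow (Module.finrank ℝ E - 1)))
      = μ.toSphere univ * ∫⁻ y : Ioi (0:ℝ), h y
          ∂(Measure.volumeIoiPow (Module.finrank ℝ E - 1)) := by
    rw [lintegral_prod _ hg.aemeasurable]
    simp [lintegral_const, mul_comm]
  have step4 : ∫⁻ y : Ioi (0:ℝ), h y ∂(Measure.volumeIoiPow (Module.finrank ℝ E - 1))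
      = ∫⁻ r in Ioi (0:ℝ), ENNReal.ofReal (r ^ (Module.finrank ℝ E - 1)) * h r := by
    have hg2 : Measurable fun y : Ioi (0:ℝ) => h ↑y := hh.comp measurable_subtype_coe
    rw [Measure.volumeIoiPow,
      lintegral_withDensity_eq_lintegral_mul _
        ((measurable_subtype_coe.pow_const _).ennreal_ofReal) hg2,
      ← lintegral_subtype_comap measurableSet_Ioi
        (fun r => ENNReal.ofReal (r ^ (Module.finrank ℝ E - 1)) * h r)]
    rfl
  rw [step1, step2, step3, step4]

end polar

lemma summable_aux {c r : ℝ} (hc : 0 < c) (hr : 1/2 < r) :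
    Summable fun n : ℕ => (1 + (c * n) ^ 2) ^ (-r) := by
  have hr0 : 0 < r := by linarith
  set K : ℝ := min 1 (c ^ 2) / 2 with hK
  have hKpos : 0 < K := by positivity
  have hsum : Summable fun n : ℕ => K ^ (-r) * ((n : ℝ) + 1) ^ (-(2 * r)) := by
    apply Summable.mul_left
    have h0 : Summable fun n : ℕ => (n : ℝ) ^ (-(2 * r)) :=
      Real.summable_nat_rpow.mpr (by linarith)
    have := (summable_nat_add_iff 1).mpr h0
    refine this.congr fun n => ?_
    push_cast
    ring_nf
  refine Summable.of_nonneg_of_le (fun n => by positivity) (fun n => ?_) hsum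
  have hbase : K * ((n : ℝ) + 1) ^ 2 ≤ 1 + (c * n) ^ 2 := by
    have h1 : min 1 (c ^ 2) ≤ 1 := min_le_left _ _
    have h2 : min 1 (c ^ 2) ≤ c ^ 2 := min_le_right _ _
    have hn : (0:ℝ) ≤ (n : ℝ) := Nat.cast_nonneg n
    nlinarith [sq_nonneg ((n:ℝ) - 1), sq_nonneg (n:ℝ)]
  have hKb : (0:ℝ) < K * ((n : ℝ) + 1) ^ 2 := by positivity
  calc (1 + (c * n) ^ 2) ^ (-r) ≤ (K * ((n : ℝ) + 1) ^ 2) ^ (-r) :=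
        Real.rpow_le_rpow_of_nonpos hKb hbase (by linarith)
    _ = K ^ (-r) * ((n : ℝ) + 1) ^ (-(2 * r)) := by
        rw [Real.mul_rpow hKpos.le (by positivity)]
        congr 1
        rw [← Real.rpow_natCast ((n:ℝ) + 1) 2, ← Real.rpow_mul (by positivity)]
        norm_num

lemma summable_int_aux {c r : ℝ} (hc : 0 < c) (hr : 1/2 < r) :
    Summable fun n : ℤ => (1 + (c * n) ^ 2) ^ (-r) := by
  apply Summable.of_nat_of_neg
  · exact (summable_aux hc hr).congr fun n => by norm_num
  · refine (summable_aux hc hr).congr fun n => ?_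
    push_cast
    ring_nf


lemma radial_lintegral_lt_top (d : ℕ) (hd : 0 < d) {s u a : ℝ}
    (hs : 0 < s) (hu : 0 ≤ u) (ha : 0 ≤ a)
    (hus : (d : ℝ) < 2 * (u + s)) (has : s - d/2 < a) :
    ∫⁻ r in Ioi (0:ℝ), ENNReal.ofReal (r ^ (d - 1)) *
      ENNReal.ofReal (min (r ^ (2*a)) 1 / (r ^ (2*s) * (1 + r^2) ^ u)) < ⊤ := by
  have hdcast : ((d - 1 : ℕ) : ℝ) = (d : ℝ) - 1 := by
    rw [Nat.cast_sub hd]; norm_num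
  set F : ℝ → ℝ≥0∞ := fun r => ENNReal.ofReal (r ^ (d - 1)) *
      ENNReal.ofReal (min (r ^ (2*a)) 1 / (r ^ (2*s) * (1 + r^2) ^ u)) with hF
  have bound1 : ∀ r ∈ Ioc (0:ℝ) 1,
      F r ≤ ENNReal.ofReal (r ^ ((d:ℝ) - 1 + (2*a - 2*s))) := by
    rintro r ⟨hr0, hr1⟩
    simp only [hF]
    rw [← ENNReal.ofReal_mul (by positivity)]
    apply ENNReal.ofReal_le_ofReal
    have hxs : 0 < r ^ (2*s) := rpow_pos_of_pos hr0 _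
    have hone : (1:ℝ) ≤ (1 + r^2) ^ u := Real.one_le_rpow (by nlinarith) hu
    have step : min (r ^ (2*a)) 1 / (r ^ (2*s) * (1 + r^2) ^ u)
        ≤ r ^ (2*a) / r ^ (2*s) := by
      gcongr
      · exact min_le_left _ _
      · exact le_mul_of_one_le_right hxs.le hone
    calc r ^ (d - 1) * (min (r ^ (2*a)) 1 / (r ^ (2*s) * (1 + r^2) ^ u))
        ≤ r ^ (d - 1) * (r ^ (2*a) / r ^ (2*s)) := by
          apply mul_le_mul_of_nonneg_left step (by positivity)
      _ = r ^ ((d:ℝ) - 1 + (2*a - 2*s)) := by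
          rw [← Real.rpow_natCast r (d - 1), hdcast, ← Real.rpow_sub hr0,
            ← Real.rpow_add hr0]
  have bound2 : ∀ r ∈ Ioi (1:ℝ),
      F r ≤ ENNReal.ofReal (r ^ ((d:ℝ) - 1 - (2*s + 2*u))) := by
    intro r hr
    have hr0 : (0:ℝ) < r := lt_trans one_pos hr
    simp only [hF]
    rw [← ENNReal.ofReal_mul (by positivity)]
    apply ENNReal.ofReal_le_ofReal
    have hxs : 0 < r ^ (2*s) := rpow_pos_of_pos hr0 _
    have hden : r ^ (2*s + 2*u) ≤ r ^ (2*s) * (1 + r^2) ^ u := by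
      have h2u : r ^ (2*u) ≤ (1 + r^2) ^ u := by
        have : r ^ (2*u) = (r^2) ^ u := by
          rw [← Real.rpow_natCast r 2, ← Real.rpow_mul hr0.le]
          norm_num
        rw [this]
        exact Real.rpow_le_rpow (by positivity) (by nlinarith) hu
      calc r ^ (2*s + 2*u) = r ^ (2*s) * r ^ (2*u) := Real.rpow_add hr0 _ _
        _ ≤ r ^ (2*s) * (1 + r^2) ^ u := by
            apply mul_le_mul_of_nonneg_left h2u hxs.le
    have hdenpos : 0 < r ^ (2*s + 2*u) := rpow_pos_of_pos hr0 _
    have step : min (r ^ (2*a)) 1 / (r ^ (2*s) * (1 + r^2) ^ u)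
        ≤ 1 / r ^ (2*s + 2*u) := by
      gcongr
      exact min_le_right _ _
    calc r ^ (d - 1) * (min (r ^ (2*a)) 1 / (r ^ (2*s) * (1 + r^2) ^ u))
        ≤ r ^ (d - 1) * (1 / r ^ (2*s + 2*u)) := by
          apply mul_le_mul_of_nonneg_left step (by positivity)
      _ = r ^ ((d:ℝ) - 1 - (2*s + 2*u)) := by
          rw [← Real.rpow_natCast r (d - 1), hdcast, one_div,
            ← Real.rpow_neg_one (r ^ (2*s + 2*u)), ← Real.rpow_mul hr0.le,
            ← Real.rpow_add hr0]
          ring_nf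
  calc ∫⁻ r in Ioi (0:ℝ), F r
      ≤ ∫⁻ r in Ioc (0:ℝ) 1 ∪ Ioi 1, F r := lintegral_mono_set Ioi_subset_Ioc_union_Ioi
    _ ≤ (∫⁻ r in Ioc (0:ℝ) 1, F r) + ∫⁻ r in Ioi (1:ℝ), F r := lintegral_union_le _ _ _
    _ < ⊤ := by
        apply ENNReal.add_lt_top.2
        constructor
        · refine lt_of_le_of_lt (setLIntegral_mono' measurableSet_Ioc bound1) ?_
          refine IntegrableOn.setLIntegral_lt_top ?_
          rw [← intervalIntegrable_iff_integrableOn_Ioc_of_le zero_le_one]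
          apply intervalIntegral.intervalIntegrable_rpow'
          have : (0:ℝ) < d := by exact_mod_cast hd
          linarith
        · refine lt_of_le_of_lt (setLIntegral_mono' measurableSet_Ioi bound2) ?_
          refine IntegrableOn.setLIntegral_lt_top ?_
          apply integrableOn_Ioi_rpow_of_lt _ one_pos
          linarith

lemma kspace_lt_top (d : ℕ) (hd : 0 < d) {s u a : ℝ}
    (hs : 0 < s) (hu : 0 ≤ u) (ha : 0 ≤ a)
    (hus : (d : ℝ) < 2 * (u + s)) (has : s - d/2 < a) :
    ∫⁻ k : EuclideanSpace ℝ (Fin d),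
      ENNReal.ofReal (min (‖k‖ ^ (2*a)) 1 / (‖k‖ ^ (2*s) * (1 + ‖k‖^2) ^ u)) < ⊤ := by
  haveI : Nontrivial (EuclideanSpace ℝ (Fin d)) :=
    Module.nontrivial_of_finrank_pos (R := ℝ) (by rw [finrank_euclideanSpace_fin]; exact hd)
  set h : ℝ → ℝ≥0∞ := fun r =>
    ENNReal.ofReal (min (r ^ (2*a)) 1 / (r ^ (2*s) * (1 + r^2) ^ u)) with hhdef
  have hh : Measurable h := by
    apply Measurable.ennreal_ofReal
    fun_prop
  have : ∫⁻ k : EuclideanSpace ℝ (Fin d),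
      ENNReal.ofReal (min (‖k‖ ^ (2*a)) 1 / (‖k‖ ^ (2*s) * (1 + ‖k‖^2) ^ u))
      = ∫⁻ k : EuclideanSpace ℝ (Fin d), h ‖k‖ := rfl
  rw [this, lintegral_fun_norm_addHaar' volume h hh, finrank_euclideanSpace_fin]
  exact ENNReal.mul_lt_top (measure_lt_top _ _)
    (radial_lintegral_lt_top d hd hs hu ha hus has)

/-- Trace-type sufficient condition for finiteness of the regularized covariance sum. -/
theorem stmt_0 (d : ℕ) (hd : 0 < d) (β s r u a : ℝ) (hβ : 0 < β)
    (hs : 0 < s) (hu : 0 ≤ u) (ha : 0 ≤ a)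
    (hr : 1/2 < r) (hus : (d : ℝ) < 2 * (u + s)) (has : s - d/2 < a) :
    ∑' n : ℤ, ∫⁻ k : EuclideanSpace ℝ (Fin d),
      ENNReal.ofReal ((min (‖k‖ ^ (2*a)) 1) /
        (((2 * Real.pi * n / β)^2 + ‖k‖ ^ (2*s)) * (1 + (2 * Real.pi * n / β)^2) ^ r
          * (1 + ‖k‖^2) ^ u)) < ⊤ := by
  have hc : 0 < 2 * Real.pi / β := by positivity
  haveI : Nontrivial (EuclideanSpace ℝ (Fin d)) :=
    Module.nontrivial_of_finrank_pos (R := ℝ) (by rw [finrank_euclideanSpace_fin]; exact hd)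
  set I := ∫⁻ k : EuclideanSpace ℝ (Fin d),
      ENNReal.ofReal (min (‖k‖ ^ (2*a)) 1 / (‖k‖ ^ (2*s) * (1 + ‖k‖^2) ^ u)) with hI
  have key : ∀ n : ℤ, (∫⁻ k : EuclideanSpace ℝ (Fin d),
      ENNReal.ofReal ((min (‖k‖ ^ (2*a)) 1) /
        (((2 * Real.pi * n / β)^2 + ‖k‖ ^ (2*s)) * (1 + (2 * Real.pi * n / β)^2) ^ r
          * (1 + ‖k‖^2) ^ u)))
      ≤ ENNReal.ofReal ((1 + (2 * Real.pi * n / β)^2) ^ (-r)) * I := by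
    intro n
    rw [hI, ← lintegral_const_mul' _ _ ENNReal.ofReal_ne_top]
    apply lintegral_mono_ae
    have h0 : ∀ᵐ k : EuclideanSpace ℝ (Fin d) ∂volume, k ≠ 0 := by
      filter_upwards [(Set.countable_singleton
        (0 : EuclideanSpace ℝ (Fin d))).ae_notMem volume] with k hk
      simpa using hk
    filter_upwards [h0] with k hk
    have hw0 : (0:ℝ) ≤ (2 * Real.pi * n / β)^2 := sq_nonneg _
    have hx : 0 < ‖k‖ := norm_pos_iff.mpr hk
    have hxs : 0 < ‖k‖ ^ (2*s) := rpow_pos_of_pos hx _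
    have hb : (0:ℝ) < 1 + (2 * Real.pi * n / β)^2 := by positivity
    have hbr : 0 < (1 + (2 * Real.pi * n / β)^2) ^ r := rpow_pos_of_pos hb r
    have hcu : 0 < (1 + ‖k‖^2) ^ u := rpow_pos_of_pos (by positivity) u
    have hmin : 0 ≤ min (‖k‖ ^ (2*a)) 1 := le_min (rpow_nonneg hx.le _) zero_le_one
    rw [← ENNReal.ofReal_mul (by positivity)]
    apply ENNReal.ofReal_le_ofReal
    rw [Real.rpow_neg hb.le, inv_mul_eq_div, div_div]
    apply div_le_div_of_nonneg_left hmin (by positivity)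
    nlinarith [mul_nonneg (mul_nonneg hw0 hbr.le) hcu.le]
  refine lt_of_le_of_lt (ENNReal.tsum_le_tsum key) ?_
  rw [ENNReal.tsum_mul_right]
  apply ENNReal.mul_lt_top _ (kspace_lt_top d hd hs hu ha hus has)
  have hsum : Summable fun n : ℤ => (1 + (2 * Real.pi * n / β)^2) ^ (-r) := by
    refine (summable_int_aux hc hr).congr fun n => ?_
    have h : 2 * Real.pi / β * (n:ℝ) = 2 * Real.pi * n / β := by ring
    rw [h]
  rw [← ENNReal.ofReal_tsum_of_nonneg (fun n => rpow_nonneg (by positivity) _) hsum]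
  exact ENNReal.ofReal_lt_top
end

section
/- Let ε > 0 and β > 0. Then (1/β) ∑_{n∈ℤ} e^{i(2πn/β)t} / ((2πn/β)² + ε²) = (e^{−|t|ε} + e^{−(β−|t|)ε}) / (2ε(1 − e^{−βε})) for all t ∈ [−β/2, β/2]. -/
/-!
On `[0, β]` put `g(x) = e^{-xε} + e^{-(β-x)ε}`. Since `g 0 = g β`, the `β`-periodic extension of
`g` is continuous, and since `g (β - x) = g x` it equals `e^{-|t|ε} + e^{-(β-|t|)ε}` for `|t| < β`.
Integrating the two exponentials against `e^{-iω_n x}` gives the Fourier coefficients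
`(1 - e^{-βε}) (1/(ε + iω_n) + 1/(ε - iω_n)) / β = 2ε(1 - e^{-βε}) / (β (ω_n² + ε²))`, which are
summable, so the Fourier series converges to the extension pointwise.
-/

open MeasureTheory Real

open Complex (I)

theorem integral_fourier_mul_exp {T : ℝ} [hT : Fact (0 < T)] (n : ℤ) {c : ℂ}
    (hc : c - 2 * π * I * n / T ≠ 0) :
    ∫ x in (0 : ℝ)..T, fourier (-n) (x : AddCircle T) * Complex.exp (c * x)
      = (Complex.exp (c * T) - 1) / (c - 2 * π * I * n / T) := by
  have hT0 : (T : ℂ) ≠ 0 := Complex.ofReal_ne_zero.mpr hT.out.ne'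
  have hprod (x : ℝ) : fourier (-n) (x : AddCircle T) * Complex.exp (c * x)
      = Complex.exp ((c - 2 * π * I * n / T) * x) := by
    rw [fourier_coe_apply, ← Complex.exp_add]
    push_cast
    ring_nf
  have hperiod : Complex.exp ((c - 2 * π * I * n / T) * T) = Complex.exp (c * T) := by
    rw [sub_mul, div_mul_cancel₀ _ hT0, Complex.exp_sub, mul_comm _ (n : ℂ),
      Complex.exp_int_mul_two_pi_mul_I, div_one]
  simp_rw [hprod]
  rw [integral_exp_mul_complex hc, hperiod]
  simp

theorem summable_one_div_mul_sq_add_sq {a : ℝ} (ha : a ≠ 0) (b : ℝ) :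
    Summable fun n : ℤ ↦ 1 / ((a * n) ^ 2 + b ^ 2) := by
  refine ((Real.summable_one_div_int_pow.mpr one_lt_two).mul_left (a ^ 2)⁻¹)
    |>.of_norm_bounded_eventually ?_
  filter_upwards [(Set.finite_singleton (0 : ℤ)).compl_mem_cofinite] with n hn
  have hn : (n : ℝ) ≠ 0 := Int.cast_ne_zero.mpr hn
  rw [Real.norm_of_nonneg (by positivity), ← one_div, one_div_mul_one_div, ← mul_pow]
  gcongr
  exact le_add_of_nonneg_right (sq_nonneg b)

noncomputable def thermalKernel (ε β x : ℝ) : ℝ :=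
  exp (-x * ε) + exp (-(β - x) * ε)

theorem thermalKernel_sub (ε β x : ℝ) : thermalKernel ε β (β - x) = thermalKernel ε β x := by
  rw [thermalKernel, thermalKernel, sub_sub_cancel, add_comm]

theorem continuous_thermalKernel (ε β : ℝ) : Continuous (thermalKernel ε β) := by
  unfold thermalKernel
  fun_prop

theorem ofReal_thermalKernel (ε β x : ℝ) :
    (thermalKernel ε β x : ℂ)
      = Complex.exp (-ε * x) + Complex.exp (-ε * β) * Complex.exp (ε * x) := by
  rw [thermalKernel, ← Complex.exp_add]
  push_cast
  ring_nf

noncomputable def thermalKernelCircle (ε β : ℝ) [Fact (0 < β)] : C(AddCircle β, ℂ) :=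
  ⟨AddCircle.liftIco β 0 (fun x ↦ (thermalKernel ε β x : ℂ)),
    AddCircle.liftIco_zero_continuous (by rw [← thermalKernel_sub, sub_zero])
      (Complex.continuous_ofReal.comp (continuous_thermalKernel ε β)).continuousOn⟩

section ThermalKernelCircle

variable {ε β : ℝ} [hβ : Fact (0 < β)]

theorem thermalKernelCircle_coe_of_mem_Icc {x : ℝ} (hx : x ∈ Set.Icc 0 β) :
    thermalKernelCircle ε β x = thermalKernel ε β x := by
  simp only [thermalKernelCircle, ContinuousMap.coe_mk]
  rcases hx.2.lt_or_eq with hxβ | rfl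
  · exact AddCircle.liftIco_zero_coe_apply ⟨hx.1, hxβ⟩
  · rw [AddCircle.coe_period, ← QuotientAddGroup.mk_zero, ← thermalKernel_sub, sub_self]
    exact AddCircle.liftIco_zero_coe_apply ⟨le_rfl, hβ.out⟩

theorem thermalKernelCircle_coe_of_abs_lt {t : ℝ} (ht : |t| < β) :
    thermalKernelCircle ε β t = thermalKernel ε β |t| := by
  rcases le_or_gt 0 t with h0 | h0
  · rw [abs_of_nonneg h0] at ht ⊢
    exact thermalKernelCircle_coe_of_mem_Icc ⟨h0, ht.le⟩
  · rw [abs_of_neg h0] at ht ⊢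
    rw [← AddCircle.coe_add_period β t,
      thermalKernelCircle_coe_of_mem_Icc ⟨by linarith, by linarith⟩, ← thermalKernel_sub ε β (-t),
      sub_neg_eq_add, add_comm]

theorem integral_fourier_mul_thermalKernelCircle (hε : ε ≠ 0) (n : ℤ) :
    ∫ x in (0 : ℝ)..β, fourier (-n) (x : AddCircle β) • thermalKernelCircle ε β x
      = (1 - Complex.exp (-ε * β))
          * (1 / (ε + 2 * π * I * n / β) + 1 / (ε - 2 * π * I * n / β)) := by
  have hne (c : ℝ) (hc : c ≠ 0) : (c : ℂ) - 2 * π * I * n / β ≠ 0 := by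
    intro h
    simpa [hc] using congrArg Complex.re h
  have hcont (c : ℂ) :
      Continuous fun x : ℝ ↦ fourier (-n) (x : AddCircle β) * Complex.exp (c * x) := by
    fun_prop
  have hsplit : ∫ x in (0 : ℝ)..β, fourier (-n) (x : AddCircle β) • thermalKernelCircle ε β x
      = ∫ x in (0 : ℝ)..β, (fourier (-n) (x : AddCircle β) * Complex.exp (-ε * x)
          + Complex.exp (-ε * β) * (fourier (-n) (x : AddCircle β) * Complex.exp (ε * x))) := by
    refine intervalIntegral.integral_congr fun x hx ↦ ?_
    rw [Set.uIcc_of_le hβ.out.le] at hx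
    rw [smul_eq_mul, thermalKernelCircle_coe_of_mem_Icc hx, ofReal_thermalKernel]
    ring
  have hneg := hne (-ε) (neg_ne_zero.mpr hε)
  rw [Complex.ofReal_neg] at hneg
  have hpos : (ε : ℂ) + 2 * π * I * n / β ≠ 0 := by
    rw [← neg_ne_zero, neg_add']
    exact hneg
  have hexp : Complex.exp (-ε * β) * Complex.exp (ε * β) = 1 := by
    rw [← Complex.exp_add, neg_mul, neg_add_cancel, Complex.exp_zero]
  rw [hsplit, intervalIntegral.integral_add ((hcont _).intervalIntegrable _ _)
      (((hcont _).intervalIntegrable _ _).const_mul _),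
    intervalIntegral.integral_const_mul, integral_fourier_mul_exp n hneg,
    integral_fourier_mul_exp n (hne ε hε), ← mul_div_assoc, mul_sub, hexp, mul_one]
  field_simp
  ring

theorem fourierCoeff_thermalKernelCircle (hε : ε ≠ 0) (n : ℤ) :
    fourierCoeff (thermalKernelCircle ε β) n
      = (2 * ε * (1 - exp (-β * ε)) : ℝ) / β / (((2 * π * n / β : ℝ) : ℂ) ^ 2 + (ε : ℂ) ^ 2) := by
  rw [fourierCoeff_eq_intervalIntegral _ _ 0, zero_add,
    integral_fourier_mul_thermalKernelCircle hε]
  have hz : 2 * π * I * n / β = I * ((2 * π * n / β : ℝ) : ℂ) := by push_cast; ring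
  have hden : ((2 * π * n / β : ℝ) : ℂ) ^ 2 + (ε : ℂ) ^ 2 ≠ 0 := by
    exact_mod_cast (by positivity : (2 * π * n / β) ^ 2 + ε ^ 2 ≠ 0)
  have hK : ((2 * ε * (1 - exp (-β * ε)) : ℝ) : ℂ) = 2 * ε * (1 - Complex.exp (-ε * β)) := by
    push_cast; ring_nf
  have hβ0 : (β : ℂ) ≠ 0 := Complex.ofReal_ne_zero.mpr hβ.out.ne'
  rw [hz, hK, Complex.real_smul, Complex.ofReal_div, Complex.ofReal_one]
  generalize ((2 * π * n / β : ℝ) : ℂ) = ω at *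
  have hlor : ((ε : ℂ) + I * ω) * (ε - I * ω) = ω ^ 2 + ε ^ 2 := by
    linear_combination (-ω ^ 2) * Complex.I_sq
  have h₁ : (ε : ℂ) + I * ω ≠ 0 := left_ne_zero_of_mul (hlor ▸ hden)
  have h₂ : (ε : ℂ) - I * ω ≠ 0 := right_ne_zero_of_mul (hlor ▸ hden)
  rw [← hlor]
  field_simp
  ring

theorem summable_fourierCoeff_thermalKernelCircle (hε : ε ≠ 0) :
    Summable (fourierCoeff (thermalKernelCircle ε β)) := by
  have hω : 2 * π / β ≠ 0 := div_ne_zero (by positivity) hβ.out.ne'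
  refine (Complex.summable_ofReal.mpr ((summable_one_div_mul_sq_add_sq hω ε).mul_left
    (2 * ε * (1 - exp (-β * ε)) / β))).congr fun n ↦ ?_
  rw [fourierCoeff_thermalKernelCircle hε]
  push_cast
  ring

theorem hasSum_exp_div_sq_add_sq (hε : ε ≠ 0) {t : ℝ} (ht : |t| < β) :
    HasSum (fun n : ℤ ↦ Complex.exp (I * (2 * π * n / β) * t) /
        (((2 * π * n / β : ℝ) : ℂ) ^ 2 + (ε : ℂ) ^ 2))
      ((β * thermalKernel ε β |t| / (2 * ε * (1 - exp (-β * ε))) : ℝ) : ℂ) := by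
  have hK : 2 * ε * (1 - exp (-β * ε)) ≠ 0 := by
    refine mul_ne_zero (mul_ne_zero two_ne_zero hε) (sub_ne_zero.mpr (Ne.symm ?_))
    rw [Ne, Real.exp_eq_one_iff]
    exact mul_ne_zero (neg_ne_zero.mpr hβ.out.ne') hε
  have hβK : ((2 * ε * (1 - exp (-β * ε)) / β : ℝ) : ℂ) ≠ 0 := by
    exact_mod_cast div_ne_zero hK hβ.out.ne'
  have hsum := has_pointwise_sum_fourier_series_of_summable
    (summable_fourierCoeff_thermalKernelCircle hε) (t : AddCircle β)
  rw [thermalKernelCircle_coe_of_abs_lt ht] at hsum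
  have hval : ((2 * ε * (1 - exp (-β * ε)) / β : ℝ) : ℂ)
      * ((β * thermalKernel ε β |t| / (2 * ε * (1 - exp (-β * ε))) : ℝ) : ℂ)
      = thermalKernel ε β |t| := by
    have hβ0 := hβ.out.ne'
    rw [← Complex.ofReal_mul]
    generalize 2 * ε * (1 - exp (-β * ε)) = K at hK ⊢
    field_simp
  rw [← hasSum_mul_left_iff hβK, hval]
  refine hsum.congr_fun fun n ↦ ?_
  rw [fourierCoeff_thermalKernelCircle hε, fourier_coe_apply, smul_eq_mul]
  push_cast
  ring_nf

end ThermalKernelCircle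

/-- Matsubara summation identity for the β-periodic covariance kernel. -/
theorem stmt_1 (ε β : ℝ) (hε : 0 < ε) (hβ : 0 < β) (t : ℝ)
    (ht : t ∈ Set.Icc (-(β/2)) (β/2)) :
    (1/β : ℂ) * ∑' n : ℤ, Complex.exp (Complex.I * (2*Real.pi*n/β) * t) /
        (((2*Real.pi*n/β : ℝ) : ℂ)^2 + (ε:ℂ)^2)
      = ((Real.exp (-(|t|)*ε) + Real.exp (-(β - |t|)*ε))
          / (2*ε*(1 - Real.exp (-β*ε))) : ℝ) := by
  have : Fact (0 < β) := ⟨hβ⟩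
  have habs : |t| < β := (abs_le.mpr ht).trans_lt (half_lt_self hβ)
  have hβ0 : (β : ℂ) ≠ 0 := Complex.ofReal_ne_zero.mpr hβ.ne'
  rw [(hasSum_exp_div_sq_add_sq hε.ne' habs).tsum_eq, thermalKernel]
  push_cast
  field_simp
end

section
/- Let χ be the probability measure on [0,∞) × [0,2π) given by dχ(r,θ) = e^{−r} dr ⊗ (1/(2π)) dθ. Then for every c ≥ 0 and z ∈ ℂ, ∫ exp(i·c·√r·Re(e^{iθ} z)) dχ(r,θ) = exp(−c²|z|²/4). -/
/-!
Under `(r, θ) ↦ √r e^{iθ}` the measure `χ` becomes the standard complex Gaussian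
`π⁻¹ e^{-|w|²} dw`: the substitution `r = s²` turns `e^{-r} dr` into `2 s e^{-s²} ds`, and
`s ds dθ` is Lebesgue measure on `ℂ` in polar coordinates. The integral is therefore the
characteristic function of this Gaussian, `exp (-c² |z|² / 4)`.
-/

open MeasureTheory Real Set Complex

noncomputable def stdExponential : Measure ℝ :=
  (volume.restrict (Ici 0)).withDensity fun r => ENNReal.ofReal (rexp (-r))

noncomputable def uniformAngle : Measure ℝ :=
  ENNReal.ofReal (1 / (2 * π)) • volume.restrict (Ico 0 (2 * π))

instance : IsProbabilityMeasure stdExponential := by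
  constructor
  rw [stdExponential, withDensity_apply _ MeasurableSet.univ, Measure.restrict_univ,
    ← ofReal_integral_eq_lintegral_ofReal _ (.of_forall fun r => (exp_pos _).le),
    integral_Ici_eq_integral_Ioi, integral_exp_neg_Ioi_zero, ENNReal.ofReal_one]
  exact (integrableOn_Ici_iff_integrableOn_Ioi).2
    (by simpa using exp_neg_integrableOn_Ioi 0 one_pos)

instance : IsProbabilityMeasure uniformAngle := by
  constructor
  rw [uniformAngle, Measure.smul_apply, Measure.restrict_apply MeasurableSet.univ, univ_inter,
    volume_Ico, smul_eq_mul, ← ENNReal.ofReal_mul (by positivity), sub_zero,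
    one_div_mul_cancel (by positivity), ENNReal.ofReal_one]

variable {E : Type*} [NormedAddCommGroup E] [NormedSpace ℝ E]

-- `Ioo (-π) π` is the angular range of `polarCoord`.
theorem integral_uniformAngle_of_periodic {f : ℝ → E} (hf : Function.Periodic f (2 * π)) :
    ∫ θ, f θ ∂uniformAngle = (2 * π)⁻¹ • ∫ θ in Ioo (-π) π, f θ := by
  rw [uniformAngle, integral_smul_measure, ENNReal.toReal_ofReal (by positivity), one_div,
    integral_Ico_eq_integral_Ioo, ← integral_Ioc_eq_integral_Ioo, ← integral_Ioc_eq_integral_Ioo,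
    ← intervalIntegral.integral_of_le two_pi_pos.le,
    ← intervalIntegral.integral_of_le (by linarith [pi_pos]),
    ← zero_add (2 * π), hf.intervalIntegral_add_eq 0 (-π), zero_add, neg_add_eq_sub,
    show 2 * π - π = π by ring]

theorem integral_stdExponential (f : ℝ → E) :
    ∫ r, f r ∂stdExponential = ∫ s in Ioi 0, (2 * s * rexp (-s ^ 2)) • f (s ^ 2) := by
  rw [stdExponential, integral_withDensity_eq_integral_toReal_smul (by fun_prop)
      (.of_forall fun _ => ENNReal.ofReal_lt_top), integral_Ici_eq_integral_Ioi,
    ← integral_comp_rpow_Ioi_of_pos two_pos]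
  refine setIntegral_congr_fun measurableSet_Ioi fun s _ => ?_
  simp only [ENNReal.toReal_ofReal (exp_pos _).le, smul_smul, rpow_two]
  norm_num

theorem integrableOn_polarCoord_target_gaussian {g : ℂ → E} (hg : Continuous g) {C : ℝ}
    (hC : ∀ w, ‖g w‖ ≤ C) :
    IntegrableOn (fun p : ℝ × ℝ => p.1 • (rexp (-p.1 ^ 2) • g (p.1 * cexp (p.2 * I))))
      polarCoord.target := by
  have hdom :
      IntegrableOn (fun p : ℝ × ℝ => (|p.1| * rexp (-p.1 ^ 2)) * C) polarCoord.target := by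
    rw [polarCoord_target, IntegrableOn, Measure.volume_eq_prod, ← Measure.prod_restrict]
    refine Integrable.mul_prod (f := fun x : ℝ => |x| * rexp (-x ^ 2)) (g := fun _ => C) ?_
      (integrable_const C)
    simpa using ((integrable_mul_exp_neg_mul_sq one_pos).abs).restrict (s := Ioi 0)
  refine hdom.mono' (by fun_prop) (.of_forall fun p => ?_)
  rw [norm_smul, norm_smul, norm_eq_abs, norm_of_nonneg (exp_pos _).le, mul_assoc]
  gcongr
  exact hC _

theorem integral_stdExponential_prod_uniformAngle {g : ℂ → E} (hg : Continuous g) {C : ℝ}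
    (hC : ∀ w, ‖g w‖ ≤ C) :
    ∫ p, g (√p.1 * cexp (p.2 * I)) ∂(stdExponential.prod uniformAngle) =
      π⁻¹ • ∫ w, rexp (-‖w‖ ^ 2) • g w := by
  have hint : Integrable (fun p : ℝ × ℝ => g (√p.1 * cexp (p.2 * I)))
      (stdExponential.prod uniformAngle) :=
    .of_bound (by fun_prop) C (.of_forall fun p => hC _)
  have hperiodic (s : ℂ) : Function.Periodic (fun θ : ℝ => g (s * cexp (θ * I))) (2 * π) :=
    fun θ => by simpa using congrArg (fun u => g (s * u)) (exp_mul_I_periodic θ)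
  rw [integral_prod _ hint]
  simp_rw [integral_uniformAngle_of_periodic (hperiodic _)]
  rw [integral_stdExponential, ← Complex.integral_comp_polarCoord_symm]
  simp only [Complex.polarCoord_symm_apply, ofReal_cos, ofReal_sin, ← exp_mul_I, norm_mul,
    norm_exp_ofReal_mul_I, norm_real, norm_eq_abs, mul_one, sq_abs]
  rw [Measure.volume_eq_prod, polarCoord_target,
    setIntegral_prod _ (integrableOn_polarCoord_target_gaussian hg hC), ← integral_smul]
  refine setIntegral_congr_fun measurableSet_Ioi fun s (hs : 0 < s) => ?_
  simp only [sqrt_sq hs.le, smul_smul, ← integral_smul]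
  congr! 2
  field_simp

theorem integral_gaussian_mul_cexp_I_mul_re (a : ℝ) (z : ℂ) :
    ∫ w : ℂ, rexp (-‖w‖ ^ 2) • cexp (I * a * (w * z).re) =
      π * cexp (-(a ^ 2 * ‖z‖ ^ 2 / 4)) := by
  have hinner (w : ℂ) : inner ℝ ((starRingEnd ℂ) z) w = (w * z).re := by
    simp [Complex.inner, mul_comm]
  calc ∫ w : ℂ, rexp (-‖w‖ ^ 2) • cexp (I * a * (w * z).re)
      = ∫ w : ℂ, cexp (-1 * ‖w‖ ^ 2 + (I * a) * inner ℝ ((starRingEnd ℂ) z) w) := by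
        congr 1 with w
        rw [hinner, real_smul, ofReal_exp, ← Complex.exp_add]
        push_cast
        ring_nf
    _ = π * cexp (-(a ^ 2 * ‖z‖ ^ 2 / 4)) := by
        rw [GaussianFourier.integral_cexp_neg_mul_sq_norm_add (by simp) (I * a)
          ((starRingEnd ℂ) z)]
        simp [Complex.finrank_real_complex, mul_pow, neg_div]

theorem stmt_3_general (c : ℝ) (z : ℂ) :
    let χ : Measure (ℝ × ℝ) :=
      ((volume.restrict (Set.Ici (0:ℝ))).withDensity
          fun r => ENNReal.ofReal (Real.exp (-r))).prod
        (ENNReal.ofReal (1/(2*Real.pi)) • volume.restrict (Set.Ico (0:ℝ) (2*Real.pi)))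
    IsProbabilityMeasure χ ∧
      ∫ p : ℝ × ℝ, Complex.exp (Complex.I * c * Real.sqrt p.1 *
          ((Complex.exp (Complex.I * p.2)) * z).re) ∂χ
        = Real.exp (-(c^2 * ‖z‖^2 / 4)) := by
  intro χ
  refine ⟨inferInstanceAs (IsProbabilityMeasure (stdExponential.prod uniformAngle)), ?_⟩
  set g : ℂ → ℂ := fun w => cexp (I * c * (w * z).re)
  have hg_bound (w : ℂ) : ‖g w‖ ≤ 1 := by simp [g, norm_exp]
  calc ∫ p, cexp (I * c * √p.1 * (cexp (I * p.2) * z).re) ∂χ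
      = ∫ p, g (√p.1 * cexp (p.2 * I)) ∂(stdExponential.prod uniformAngle) := by
        refine integral_congr_ae (.of_forall fun p => ?_)
        dsimp only [g]
        rw [mul_comm (p.2 : ℂ) I, mul_assoc (√p.1 : ℂ), re_ofReal_mul]
        push_cast
        ring_nf
    _ = π⁻¹ • (π * cexp (-(c ^ 2 * ‖z‖ ^ 2 / 4))) := by
        rw [integral_stdExponential_prod_uniformAngle (by fun_prop) hg_bound,
          integral_gaussian_mul_cexp_I_mul_re]
    _ = rexp (-(c ^ 2 * ‖z‖ ^ 2 / 4)) := by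
        rw [real_smul, ← mul_assoc, ofReal_inv, inv_mul_cancel₀ (ofReal_ne_zero.2 pi_ne_zero),
          one_mul]
        push_cast
        rfl

/-- Integral representation of exp(-(1/4)q₀(f)) over the polar-coordinate probability
measure dχ(r,θ) = e^{-r} dr ⊗ (2π)⁻¹ dθ. -/
theorem stmt_3 (c : ℝ) (hc : 0 ≤ c) (z : ℂ) :
    let χ : Measure (ℝ × ℝ) :=
      ((volume.restrict (Set.Ici (0:ℝ))).withDensity
          fun r => ENNReal.ofReal (Real.exp (-r))).prod
        (ENNReal.ofReal (1/(2*Real.pi)) • volume.restrict (Set.Ico (0:ℝ) (2*Real.pi)))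
    IsProbabilityMeasure χ ∧
      ∫ p : ℝ × ℝ, Complex.exp (Complex.I * c * Real.sqrt p.1 *
          ((Complex.exp (Complex.I * p.2)) * z).re) ∂χ
        = Real.exp (-(c^2 * ‖z‖^2 / 4)) :=
  stmt_3_general c z
end

section
/- Let e_I, e_J, e_K be orthogonal projections on a Hilbert space with e_J e_I = e_K (so e_K ≤ e_J and e_K ≤ e_I). Then for every vector f, ‖(1−e_I)f‖² + ‖(1−e_J)e_I f‖² = ‖(1−e_K)f‖². -/
namespace LinearMap

variable {𝕜 E : Type*} [RCLike 𝕜] [NormedAddCommGroup E] [InnerProductSpace 𝕜 E]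

theorem IsSymmetric.mul_eq_self_of_mul_eq_self {P T : E →ₗ[𝕜] E} (hP : P.IsSymmetric)
    (hT : T.IsSymmetric) (hTP : T * P = T) : P * T = T := by
  ext x
  refine ext_inner_left 𝕜 fun v => ?_
  calc inner 𝕜 v (P (T x)) = inner 𝕜 (T (P v)) x := by rw [← hP, hT]
    _ = inner 𝕜 v (T x) := by rw [← Module.End.mul_apply, hTP, hT]

theorem IsSymmetricProjection.inner_sub_apply_self_apply_eq_zero {P : E →ₗ[𝕜] E}
    (hP : P.IsSymmetricProjection) (x y : E) : inner 𝕜 (x - P x) (P y) = 0 := by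
  rw [← hP.isSymmetric, map_sub, ← Module.End.mul_apply, hP.isIdempotentElem.eq, sub_self,
    inner_zero_left]

/-- `x - T x = (x - P x) + P (x - T x)` is an orthogonal splitting, since `P T = T`. -/
theorem IsSymmetricProjection.norm_sub_sq_add_norm_sub_sq {P T : E →ₗ[𝕜] E}
    (hP : P.IsSymmetricProjection) (hT : T.IsSymmetric) (hTP : T * P = T) (x : E) :
    ‖x - P x‖ ^ 2 + ‖P x - T x‖ ^ 2 = ‖x - T x‖ ^ 2 := by
  have hPT : P * T = T := hP.isSymmetric.mul_eq_self_of_mul_eq_self hT hTP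
  have hrange : P x - T x = P (x - T x) := by rw [map_sub, ← Module.End.mul_apply P T, hPT]
  have horth : inner 𝕜 (x - P x) (P x - T x) = 0 := by
    rw [hrange]
    exact hP.inner_sub_apply_self_apply_eq_zero x (x - T x)
  rw [← sub_add_sub_cancel x (P x) (T x), norm_add_sq (𝕜 := 𝕜), horth, map_zero, mul_zero,
    add_zero]

end LinearMap

theorem stmt_14_general {E : Type*} [NormedAddCommGroup E] [InnerProductSpace ℝ E]
    (eI eJ eK : E →L[ℝ] E)
    (hIsym : ∀ x y : E, (inner ℝ (eI x) y : ℝ) = inner ℝ x (eI y)) (hI2 : eI ∘L eI = eI)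
    (hKsym : ∀ x y : E, (inner ℝ (eK x) y : ℝ) = inner ℝ x (eK y))
    (hJI : eJ ∘L eI = eK) (f : E) :
    ‖f - eI f‖^2 + ‖eI f - eJ (eI f)‖^2 = ‖f - eK f‖^2 := by
  have hI : (eI : E →ₗ[ℝ] E).IsSymmetricProjection :=
    ⟨ContinuousLinearMap.IsIdempotentElem.toLinearMap (show IsIdempotentElem eI from hI2), hIsym⟩
  have hKI : (eK : E →ₗ[ℝ] E) * eI = eK := by
    rw [← ContinuousLinearMap.toLinearMap_mul, ContinuousLinearMap.mul_def, ← hJI,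
      ContinuousLinearMap.comp_assoc, hI2]
  rw [← ContinuousLinearMap.comp_apply, hJI]
  exact hI.norm_sub_sq_add_norm_sub_sq hKsym hKI f

/-- Pythagorean identity for orthogonal projections with e_J e_I = e_K, proving the
combination rule for the normalizing constants in the β-Markov property. -/
theorem stmt_14 {E : Type*} [NormedAddCommGroup E] [InnerProductSpace ℝ E]
    (eI eJ eK : E →L[ℝ] E)
    (hIsym : ∀ x y : E, (inner ℝ (eI x) y : ℝ) = inner ℝ x (eI y)) (hI2 : eI ∘L eI = eI)
    (hJsym : ∀ x y : E, (inner ℝ (eJ x) y : ℝ) = inner ℝ x (eJ y)) (hJ2 : eJ ∘L eJ = eJ)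
    (hKsym : ∀ x y : E, (inner ℝ (eK x) y : ℝ) = inner ℝ x (eK y)) (hK2 : eK ∘L eK = eK)
    (hJI : eJ ∘L eI = eK) (f : E) :
    ‖f - eI f‖^2 + ‖eI f - eJ (eI f)‖^2 = ‖f - eK f‖^2 :=
  stmt_14_general eI eJ eK hIsym hI2 hKsym hJI f
end
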